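/- arXiv:1502.01273 — 5 statements merged into one kernel-verified Lean document; each statement's English description precedes it below -/
import Mathlib

section
/- Let (L,ρ) be an (R,A)-Lie algebra, M a left L-module and N a right L-module (A-modules with compatible actions). Then N ⊗_A M carries a right L-module structure given by (n ⊗ m)·x = n·x ⊗ m − n ⊗ x·m, i.e. this action is well-defined and satisfies the right-module compatibility conditions m·(ax) = a(m·x) − ρ(x)(a)m and (am)·x = a(m·x) − ρ(x)(a)m. -/
/-! The formula `n ⊗ m ↦ n•x ⊗ m − n ⊗ x•m` is `A`-balanced, because the terms
`ρ(x)(a) • (n ⊗ m)` produced by the Leibniz rules of `N` and of `M` cancel; so it descends to an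
additive endomorphism of `N ⊗_A M`. Each axiom of a right module is additive in the tensor, hence
holds once it holds on pure tensors, where it follows from the matching axioms of `N` and `M`. -/

open scoped TensorProduct

/-- A Lie–Rinehart algebra (an `(R,A)`-Lie algebra). -/
structure LieRinehart (R A L : Type*) [CommRing R] [CommRing A] [Algebra R A]
    [LieRing L] [LieAlgebra R L] [Module A L] where
  ρ : L →ₗ[A] Derivation R A A
  ρ_lie : ∀ x y : L, ρ ⁅x, y⁆ = ⁅ρ x, ρ y⁆
  leibniz : ∀ (a : A) (x y : L), ⁅x, a • y⁆ = a • ⁅x, y⁆ + (ρ x a) • y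

/-- A left module structure over a Lie–Rinehart algebra on an `A`-module `M`. -/
structure IsLRLeftModule {R A L : Type*} [CommRing R] [CommRing A] [Algebra R A]
    [LieRing L] [LieAlgebra R L] [Module A L] (LR : LieRinehart R A L)
    (M : Type*) [AddCommGroup M] [Module A M] (σ : L → M → M) : Prop where
  add_m : ∀ (x : L) (m n : M), σ x (m + n) = σ x m + σ x n
  add_x : ∀ (x y : L) (m : M), σ (x + y) m = σ x m + σ y m
  smul_x : ∀ (a : A) (x : L) (m : M), σ (a • x) m = a • σ x m
  leibniz : ∀ (x : L) (a : A) (m : M), σ x (a • m) = a • σ x m + (LR.ρ x a) • m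
  lie : ∀ (x y : L) (m : M), σ ⁅x, y⁆ m = σ x (σ y m) - σ y (σ x m)

/-- A right module structure over a Lie–Rinehart algebra on an `A`-module `N`:
an action `τ` satisfying `n•(a•x) = a•(n•x) − ρ(x)(a)•n` and
`(a•n)•x = a•(n•x) − ρ(x)(a)•n`. -/
structure IsLRRightModule {R A L : Type*} [CommRing R] [CommRing A] [Algebra R A]
    [LieRing L] [LieAlgebra R L] [Module A L] (LR : LieRinehart R A L)
    (N : Type*) [AddCommGroup N] [Module A N] (τ : N → L → N) : Prop where
  add_m : ∀ (m n : N) (x : L), τ (m + n) x = τ m x + τ n x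
  add_x : ∀ (n : N) (x y : L), τ n (x + y) = τ n x + τ n y
  smul_x : ∀ (n : N) (a : A) (x : L), τ n (a • x) = a • τ n x - (LR.ρ x a) • n
  smul_m : ∀ (a : A) (n : N) (x : L), τ (a • n) x = a • τ n x - (LR.ρ x a) • n
  lie : ∀ (n : N) (x y : L), τ n ⁅x, y⁆ = τ (τ n x) y - τ (τ n y) x

open TensorProduct

namespace LieRinehart

variable {R A L M N : Type*} [CommRing R] [CommRing A] [Algebra R A]
  [LieRing L] [LieAlgebra R L] [Module A L]
  [AddCommGroup M] [Module A M] [AddCommGroup N] [Module A N]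
  {LR : LieRinehart R A L} {σ : L → M → M} {τ : N → L → N}

def tensorActBiadd (hσ : IsLRLeftModule LR M σ) (hτ : IsLRRightModule LR N τ) (x : L) :
    N →+ M →+ N ⊗[A] M :=
  AddMonoidHom.mk'
    (fun n => AddMonoidHom.mk' (fun m => τ n x ⊗ₜ m - n ⊗ₜ σ x m) fun m₁ m₂ => by
      simp only [hσ.add_m, tmul_add]
      abel)
    fun n₁ n₂ => by
      ext m
      simp only [AddMonoidHom.mk'_apply, AddMonoidHom.add_apply, hτ.add_m, add_tmul]
      abel

variable (hσ : IsLRLeftModule LR M σ) (hτ : IsLRRightModule LR N τ)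

theorem tensorActBiadd_balanced (x : L) (a : A) (n : N) (m : M) :
    tensorActBiadd hσ hτ x (a • n) m = tensorActBiadd hσ hτ x n (a • m) := by
  simp only [tensorActBiadd, AddMonoidHom.mk'_apply, hτ.smul_m, hσ.leibniz, sub_tmul, tmul_add,
    ← smul_tmul', tmul_smul, smul_tmul (LR.ρ x a)]
  abel

def tensorAct (x : L) : N ⊗[A] M →+ N ⊗[A] M :=
  liftAddHom (tensorActBiadd hσ hτ x) (tensorActBiadd_balanced hσ hτ x)

@[simp]
theorem tensorAct_tmul (n : N) (m : M) (x : L) :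
    tensorAct hσ hτ x (n ⊗ₜ m) = τ n x ⊗ₜ m - n ⊗ₜ σ x m :=
  liftAddHom_tmul _ _ n m

theorem tensorAct_add (t : N ⊗[A] M) (x y : L) :
    tensorAct hσ hτ (x + y) t = tensorAct hσ hτ x t + tensorAct hσ hτ y t := by
  induction t using TensorProduct.induction_on with
  | zero => simp
  | tmul n m =>
    simp only [tensorAct_tmul, hτ.add_x, hσ.add_x, add_tmul, tmul_add]
    abel
  | add s t hs ht =>
    simp only [map_add, hs, ht]
    abel

theorem tensorAct_smul (t : N ⊗[A] M) (a : A) (x : L) :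
    tensorAct hσ hτ (a • x) t = a • tensorAct hσ hτ x t - LR.ρ x a • t := by
  induction t using TensorProduct.induction_on with
  | zero => simp
  | tmul n m =>
    simp only [tensorAct_tmul, hτ.smul_x, hσ.smul_x, sub_tmul, tmul_smul, ← smul_tmul',
      smul_sub]
    abel
  | add s t hs ht =>
    simp only [map_add, hs, ht, smul_add]
    abel

theorem tensorAct_apply_smul (a : A) (t : N ⊗[A] M) (x : L) :
    tensorAct hσ hτ x (a • t) = a • tensorAct hσ hτ x t - LR.ρ x a • t := by
  induction t using TensorProduct.induction_on with
  | zero => simp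
  | tmul n m =>
    rw [smul_tmul', tensorAct_tmul, tensorAct_tmul, hτ.smul_m]
    simp only [sub_tmul, ← smul_tmul', smul_sub]
    abel
  | add s t hs ht =>
    simp only [smul_add, map_add, hs, ht]
    abel

theorem tensorAct_lie (t : N ⊗[A] M) (x y : L) :
    tensorAct hσ hτ ⁅x, y⁆ t =
      tensorAct hσ hτ y (tensorAct hσ hτ x t) - tensorAct hσ hτ x (tensorAct hσ hτ y t) := by
  induction t using TensorProduct.induction_on with
  | zero => simp
  | tmul n m =>
    simp only [tensorAct_tmul, map_sub, hτ.lie, hσ.lie, sub_tmul, tmul_sub]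
    abel
  | add s t hs ht =>
    simp only [map_add, hs, ht]
    abel

theorem isLRRightModule_tensorAct :
    IsLRRightModule LR (N ⊗[A] M) fun t x => tensorAct hσ hτ x t where
  add_m s t _ := map_add _ s t
  add_x := tensorAct_add hσ hτ
  smul_x := tensorAct_smul hσ hτ
  smul_m := tensorAct_apply_smul hσ hτ
  lie := tensorAct_lie hσ hτ

end LieRinehart

/-- if `M` is a left `L`-module and `N` a right `L`-module, then
`N ⊗_A M` carries a right `L`-module structure with `(n ⊗ m)•x = n•x ⊗ m − n ⊗ x•m`. -/
theorem tensor_product_right_module {R A L M N : Type*} [CommRing R] [CommRing A]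
    [Algebra R A] [LieRing L] [LieAlgebra R L] [Module A L]
    [AddCommGroup M] [Module A M] [AddCommGroup N] [Module A N]
    (LR : LieRinehart R A L) (σ : L → M → M) (τ : N → L → N)
    (hσ : IsLRLeftModule LR M σ) (hτ : IsLRRightModule LR N τ) :
    ∃ act : (N ⊗[A] M) → L → (N ⊗[A] M),
      (∀ (n : N) (m : M) (x : L), act (n ⊗ₜ m) x = (τ n x) ⊗ₜ m - n ⊗ₜ (σ x m)) ∧
      IsLRRightModule LR (N ⊗[A] M) act :=
  ⟨_, LieRinehart.tensorAct_tmul hσ hτ, LieRinehart.isLRRightModule_tensorAct hσ hτ⟩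
end

section
/- Let (L,ρ) be an (R,A)-Lie algebra acting on B extending its action on A via σ, and suppose f₁,…,f_r ∈ B satisfy L·f_i ⊆ A for each i, and that there exist x₁,…,x_r ∈ L with x_i·f_j = δ_{ij}. Then L decomposes as a direct sum of A-modules: L = (⊕_{i=1}^r A x_i) ⊕ C_L({f₁,…,f_r}), where C_L(F) = {y ∈ L : y·f = 0 for all f ∈ F}. In particular, if L is projective as an A-module, so is C_L({f₁,…,f_r}). -/
/-!
Since `φ` is injective and `L · fᵢ ⊆ φ(A)`, each `y ↦ φ⁻¹(y · fᵢ)` is an `A`-linear functional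
`gᵢ : L → A`, and `gⱼ(xᵢ) = δᵢⱼ`. The centraliser is the common kernel of the `gᵢ`, and
`u ↦ u - ∑ gᵢ(u) xᵢ` is a projection of `L` onto it with kernel `⊕ A xᵢ`. In particular the
centraliser is a direct summand of `L`, hence projective when `L` is.
-/

namespace Module

variable {A L ι : Type*} [CommRing A] [AddCommGroup L] [Module A L] [Fintype ι] [DecidableEq ι]
  {g : ι → L →ₗ[A] A} {x : ι → L}

theorem apply_sum_smul_of_dual (hgx : ∀ i j, g j (x i) = if i = j then 1 else 0)
    (a : ι → A) (j : ι) : g j (∑ i, a i • x i) = a j := by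
  simp [map_sum, hgx]

theorem sub_sum_smul_mem_iInf_ker (hgx : ∀ i j, g j (x i) = if i = j then 1 else 0) (u : L) :
    u - ∑ i, g i u • x i ∈ ⨅ i, LinearMap.ker (g i) := by
  simp only [Submodule.mem_iInf, LinearMap.mem_ker, map_sub, apply_sum_smul_of_dual hgx,
    sub_self, implies_true]

theorem eq_zero_of_sum_smul_add_mem_iInf_ker (hgx : ∀ i j, g j (x i) = if i = j then 1 else 0)
    {a : ι → A} {c : L} (hc : c ∈ ⨅ i, LinearMap.ker (g i)) (h : ∑ i, a i • x i + c = 0) :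
    (∀ i, a i = 0) ∧ c = 0 := by
  simp only [Submodule.mem_iInf, LinearMap.mem_ker] at hc
  have ha : ∀ j, a j = 0 := fun j => by
    simpa [apply_sum_smul_of_dual hgx, hc] using congrArg (g j) h
  exact ⟨ha, by simpa [ha] using h⟩

theorem projective_iInf_ker (hgx : ∀ i j, g j (x i) = if i = j then 1 else 0)
    [Module.Projective A L] : Module.Projective A ↥(⨅ i, LinearMap.ker (g i)) := by
  let K := ⨅ i, LinearMap.ker (g i)
  let π : L →ₗ[A] K :=
    (LinearMap.id - Fintype.linearCombination A x ∘ₗ LinearMap.pi g).codRestrict K fun u => by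
      simpa only [LinearMap.sub_apply, LinearMap.id_apply, LinearMap.comp_apply,
        Fintype.linearCombination_apply, LinearMap.pi_apply] using sub_sum_smul_mem_iInf_ker hgx u
  refine .of_split K.subtype π (LinearMap.ext fun c => Subtype.ext ?_)
  have hgc : ∀ j, g j c = 0 := fun j => LinearMap.mem_ker.1 (Submodule.mem_iInf _ |>.1 c.2 j)
  simp [π, Fintype.linearCombination_apply, hgc]

end Module

section ActionFunctional

variable {A B L F : Type*} [CommRing A] [CommRing B] [AddCommGroup L] [Module A L]
  [FunLike F A B] [RingHomClass F A B] {φ : F} {σ : L → B → B}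

noncomputable def functionalOfAction (hφ : Function.Injective φ)
    (haddx : ∀ (x y : L) (b : B), σ (x + y) b = σ x b + σ y b)
    (hA : ∀ (a : A) (x : L) (b : B), σ (a • x) b = φ a * σ x b)
    (b : B) (hb : ∀ y, σ y b ∈ Set.range φ) : L →ₗ[A] A where
  toFun y := (Equiv.ofInjective φ hφ).symm ⟨σ y b, hb y⟩
  map_add' u v := hφ <| by simp only [Equiv.apply_ofInjective_symm, map_add, haddx]
  map_smul' a u := hφ <| by
    simp only [Equiv.apply_ofInjective_symm, smul_eq_mul, map_mul, hA, RingHom.id_apply]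

theorem map_functionalOfAction (hφ : Function.Injective φ)
    (haddx : ∀ (x y : L) (b : B), σ (x + y) b = σ x b + σ y b)
    (hA : ∀ (a : A) (x : L) (b : B), σ (a • x) b = φ a * σ x b)
    (b : B) (hb : ∀ y, σ y b ∈ Set.range φ) (y : L) :
    φ (functionalOfAction hφ haddx hA b hb y) = σ y b :=
  Equiv.apply_ofInjective_symm hφ _

end ActionFunctional

theorem centraliser_direct_sum_general {R A B L : Type*} [CommRing R] [CommRing A]
    [Algebra R A] [CommRing B] [Algebra R B]
    [LieRing L] [Module A L]
    (φ : A →ₐ[R] B) (hφ : Function.Injective φ)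
    (σ : L → B → B)
    (haddx : ∀ (x y : L) (b : B), σ (x + y) b = σ x b + σ y b)
    (hA : ∀ (a : A) (x : L) (b : B), σ (a • x) b = φ a * σ x b)
    {r : ℕ} (f : Fin r → B) (x : Fin r → L)
    (hfA : ∀ (i : Fin r) (y : L), σ y (f i) ∈ Set.range φ)
    (hδ : ∀ i j : Fin r, σ (x i) (f j) = if i = j then 1 else 0) :
    ∃ C : Submodule A L,
      (∀ y : L, y ∈ C ↔ ∀ i : Fin r, σ y (f i) = 0) ∧
      -- the sum `(⊕_i A x_i) + C` is all of `L` ...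
      (∀ u : L, ∃ (a : Fin r → A) (c : L), c ∈ C ∧ u = (∑ i, a i • x i) + c) ∧
      -- ... and the sum is direct:
      (∀ (a : Fin r → A) (c : L), c ∈ C → (∑ i, a i • x i) + c = 0 →
        (∀ i, a i = 0) ∧ c = 0) ∧
      -- if `L` is projective over `A`, so is `C`:
      (Module.Projective A L → Module.Projective A C) := by
  let g i := functionalOfAction hφ haddx hA (f i) (hfA i)
  have hg : ∀ i y, φ (g i y) = σ y (f i) := fun i =>
    map_functionalOfAction hφ haddx hA (f i) (hfA i)
  have hgx : ∀ i j, g j (x i) = if i = j then 1 else 0 := fun i j =>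
    hφ <| by rw [hg, hδ]; split_ifs <;> simp
  refine ⟨⨅ i, LinearMap.ker (g i), fun y => ?_,
    fun u => ⟨fun i => g i u, _, Module.sub_sum_smul_mem_iInf_ker hgx u, by abel⟩,
    fun _ _ hc h => Module.eq_zero_of_sum_smul_add_mem_iInf_ker hgx hc h,
    fun _ => Module.projective_iInf_ker hgx⟩
  simp only [Submodule.mem_iInf, LinearMap.mem_ker, ← hg, map_eq_zero_iff φ hφ]

/-- in the setting of a Lie–Rinehart algebra `(L,ρ)` acting on `B`
(extending its action on `A` via an injective `φ : A → B` and `σ : L → Der_R(B)`),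
if `f₁,…,f_r ∈ B` satisfy `L·f_i ⊆ A` and there are `x₁,…,x_r ∈ L` with
`x_i·f_j = δ_{ij}`, then `L = (⊕_{i} A x_i) ⊕ C_L({f₁,…,f_r})`; in particular if `L`
is projective as an `A`-module, so is the centraliser. -/
theorem centraliser_direct_sum {R A B L : Type*} [CommRing R] [CommRing A]
    [Algebra R A] [CommRing B] [Algebra R B]
    [LieRing L] [LieAlgebra R L] [Module A L]
    (LR : LieRinehart R A L)
    (φ : A →ₐ[R] B) (hφ : Function.Injective φ)
    (σ : L → B → B)
    (hadd : ∀ (x : L) (b c : B), σ x (b + c) = σ x b + σ x c)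
    (hmul : ∀ (x : L) (b c : B), σ x (b * c) = b * σ x c + σ x b * c)
    (hR : ∀ (x : L) (r : R), σ x (algebraMap R B r) = 0)
    (haddx : ∀ (x y : L) (b : B), σ (x + y) b = σ x b + σ y b)
    (hA : ∀ (a : A) (x : L) (b : B), σ (a • x) b = φ a * σ x b)
    (hlie : ∀ (x y : L) (b : B), σ ⁅x, y⁆ b = σ x (σ y b) - σ y (σ x b))
    (hcompat : ∀ (x : L) (a : A), σ x (φ a) = φ (LR.ρ x a))
    {r : ℕ} (f : Fin r → B) (x : Fin r → L)
    (hfA : ∀ (i : Fin r) (y : L), σ y (f i) ∈ Set.range φ)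
    (hδ : ∀ i j : Fin r, σ (x i) (f j) = if i = j then 1 else 0) :
    ∃ C : Submodule A L,
      (∀ y : L, y ∈ C ↔ ∀ i : Fin r, σ y (f i) = 0) ∧
      -- the sum `(⊕_i A x_i) + C` is all of `L` ...
      (∀ u : L, ∃ (a : Fin r → A) (c : L), c ∈ C ∧ u = (∑ i, a i • x i) + c) ∧
      -- ... and the sum is direct:
      (∀ (a : Fin r → A) (c : L), c ∈ C → (∑ i, a i • x i) + c = 0 →
        (∀ i, a i = 0) ∧ c = 0) ∧
      -- if `L` is projective over `A`, so is `C`: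
      (Module.Projective A L → Module.Projective A C) :=
  centraliser_direct_sum_general φ hφ σ haddx hA f x hfA hδ
end

section
/- Let I be an ideal in a commutative R-algebra A and let (L,ρ) be an (R,A)-Lie algebra with an I-standard basis {x₁,…,x_d} and corresponding generating set F = {f₁,…,f_r} for I. Then: (a) the centraliser C_L(F) equals A x_{r+1} ⊕ ⋯ ⊕ A x_d; (b) the normaliser N_L(I) equals I x₁ ⊕ ⋯ ⊕ I x_r ⊕ C_L(F); (c) N_L(I)/IL is a free A/I-module with basis the images of x_{r+1},…,x_d; (d) N_L(I)/IL ≅ C_L(F)/I·C_L(F) as (R, A/I)-Lie algebras. -/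
theorem Fin.forall_castLE_iff {r d : ℕ} (h : r ≤ d) {P : Fin d → Prop} :
    (∀ j : Fin r, P (Fin.castLE h j)) ↔ ∀ i : Fin d, (i : ℕ) < r → P i :=
  ⟨fun hP i hi => hP ⟨i, hi⟩, fun hP j => hP _ j.2⟩

@[simps]
def Derivation.evalₗ {R A M : Type*} [CommSemiring R] [CommSemiring A] [Algebra R A]
    [AddCommMonoid M] [Module A M] [Module R M] [IsScalarTower R A M] (a : A) :
    Derivation R A M →ₗ[A] M where
  toFun D := D a
  map_add' _ _ := rfl
  map_smul' _ _ := rfl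

theorem Derivation.mapsTo_span_iff {R A : Type*} [CommSemiring R] [CommSemiring A] [Algebra R A]
    (D : Derivation R A A) (s : Set A) :
    Set.MapsTo D (Ideal.span s) (Ideal.span s) ↔ ∀ x ∈ s, D x ∈ Ideal.span s := by
  refine ⟨fun h x hx => h (Ideal.subset_span hx), fun h a ha => ?_⟩
  induction ha using Submodule.span_induction with
  | mem x hx => exact h x hx
  | zero => simp
  | add x y _ _ hx hy => simpa using Ideal.add_mem _ hx hy
  | smul a x hx' hx =>
    rw [smul_eq_mul, D.leibniz]
    exact Ideal.add_mem _ (Ideal.mul_mem_left _ a hx) (Ideal.mul_mem_right _ _ hx')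

namespace Module.Basis

section Semiring
variable {ι A M : Type*} [Semiring A] [AddCommMonoid M] [Module A M] (b : Basis ι A M)

theorem mem_span_image_iff_repr_eq_zero {s : Set ι} {m : M} :
    m ∈ Submodule.span A (b '' s) ↔ ∀ i ∉ s, b.repr m i = 0 := by
  rw [b.mem_span_image]
  exact ⟨fun h i hi => by_contra fun hne => hi (h (Finsupp.mem_support_iff.2 hne)),
    fun h i hi => by_contra fun his => Finsupp.mem_support_iff.1 hi (h i his)⟩

theorem apply_eq_repr_of_apply_self [DecidableEq ι] (φ : M →ₗ[A] A) (k : ι)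
    (h : ∀ i, φ (b i) = if i = k then 1 else 0) (m : M) : φ m = b.repr m k := by
  have : φ = b.coord k := b.ext fun i => by simp [h, Finsupp.single_apply]
  rw [this, b.coord_apply]

end Semiring

section CommRing
variable {ι A M : Type*} [CommRing A] [AddCommGroup M] [Module A M] (b : Basis ι A M)
  (I : Ideal A)

theorem mem_ideal_smul_span_image_iff (s : Set ι) (z : M) :
    z ∈ I • Submodule.span A (b '' s) ↔
      z ∈ Submodule.span A (b '' s) ∧ ∀ i, b.repr z i ∈ I := by
  constructor
  · intro hz
    refine ⟨Submodule.smul_le_right hz, ?_⟩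
    refine Submodule.smul_induction_on hz (fun a ha x _ i => ?_) (fun x y hx hy i => ?_)
    · simpa using I.mul_mem_right _ ha
    · simpa using I.add_mem (hx i) (hy i)
  · rintro ⟨hs, hI⟩
    rw [← b.linearCombination_repr z, Finsupp.linearCombination_apply]
    exact Submodule.sum_mem _ fun i hi => Submodule.smul_mem_smul (hI i)
      (Submodule.subset_span ⟨i, b.mem_span_image.1 hs hi, rfl⟩)

theorem mem_ideal_smul_top_iff (z : M) :
    z ∈ I • (⊤ : Submodule A M) ↔ ∀ i, b.repr z i ∈ I := by
  simpa [b.span_eq] using b.mem_ideal_smul_span_image_iff I Set.univ z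

variable [Fintype ι]

theorem exists_sub_sum_mem_ideal_smul_top (s : Set ι) {y : M} (hy : ∀ i ∉ s, b.repr y i ∈ I) :
    ∃ c : ι → A, (∀ i ∉ s, c i = 0) ∧ y - ∑ i, c i • b i ∈ I • (⊤ : Submodule A M) := by
  classical
  refine ⟨fun i => if i ∈ s then b.repr y i else 0, fun i hi => if_neg hi, ?_⟩
  rw [b.mem_ideal_smul_top_iff]
  intro i
  rw [map_sub, Finsupp.sub_apply, b.repr_sum_self]
  by_cases hi : i ∈ s <;> simp [hi, hy]

theorem sub_mem_of_sub_sum_mem_ideal_smul_top {y : M} {c c' : ι → A}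
    (hc : y - ∑ i, c i • b i ∈ I • (⊤ : Submodule A M))
    (hc' : y - ∑ i, c' i • b i ∈ I • (⊤ : Submodule A M)) (i : ι) : c i - c' i ∈ I := by
  simp only [b.mem_ideal_smul_top_iff, map_sub, Finsupp.sub_apply, b.repr_sum_self] at hc hc'
  simpa using I.sub_mem (hc' i) (hc i)

end CommRing

end Module.Basis

namespace LieRinehart

variable {R A L : Type*} [CommRing R] [CommRing A] [Algebra R A]
  [LieRing L] [LieAlgebra R L] [Module A L] (LR : LieRinehart R A L)
  {d r : ℕ} (b : Module.Basis (Fin d) A L) {f : Fin r → A}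

theorem ρ_apply_eq_repr (hrd : r ≤ d)
    (hδ : ∀ (i : Fin d) (j : Fin r), LR.ρ (b i) (f j) = if (i : ℕ) = (j : ℕ) then 1 else 0)
    (y : L) (j : Fin r) : LR.ρ y (f j) = b.repr y (Fin.castLE hrd j) :=
  b.apply_eq_repr_of_apply_self ((Derivation.evalₗ (f j)).comp LR.ρ) _
    (fun i => by simp [hδ, Fin.ext_iff]) y

theorem centralises_iff (hrd : r ≤ d)
    (hδ : ∀ (i : Fin d) (j : Fin r), LR.ρ (b i) (f j) = if (i : ℕ) = (j : ℕ) then 1 else 0)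
    (y : L) :
    (∀ j, LR.ρ y (f j) = 0) ↔ ∀ i : Fin d, (i : ℕ) < r → b.repr y i = 0 := by
  simp_rw [LR.ρ_apply_eq_repr b hrd hδ]
  exact Fin.forall_castLE_iff hrd (P := fun i => b.repr y i = 0)

theorem normalises_iff (hrd : r ≤ d)
    (hδ : ∀ (i : Fin d) (j : Fin r), LR.ρ (b i) (f j) = if (i : ℕ) = (j : ℕ) then 1 else 0)
    {I : Ideal A} (hgen : I = Ideal.span (Set.range f)) (y : L) :
    (∀ a ∈ I, LR.ρ y a ∈ I) ↔ ∀ i : Fin d, (i : ℕ) < r → b.repr y i ∈ I := by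
  subst hgen
  refine ((LR.ρ y).mapsTo_span_iff _).trans ?_
  simp_rw [Set.forall_mem_range, LR.ρ_apply_eq_repr b hrd hδ]
  exact Fin.forall_castLE_iff hrd (P := fun i => b.repr y i ∈ _)

end LieRinehart

/-- let `I` be an ideal of `A` and `(L,ρ)` an `(R,A)`-Lie algebra with an
`I`-standard basis `x₁,…,x_d` (an `A`-basis of `L`, given here by a `Basis`) and
corresponding generating set `f₁,…,f_r` of `I` (`r ≤ d`, `ρ(x_i)(f_j) = δ_{ij}`).
Writing `C = C_L(F) = A x_{r+1} ⊕ ⋯ ⊕ A x_d` and `N = N_L(I)`, we have: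
(a) `C_L(F)` is the span of `x_{r+1},…,x_d`;
(b) `N = I x₁ ⊕ ⋯ ⊕ I x_r ⊕ C`;
(c) `N/IL` is a free `A/I`-module on the images of `x_{r+1},…,x_d`;
(d) `N/IL ≅ C/IC` (the inclusion `C → N` is surjective onto `N` modulo `IL` and has
"kernel" `IC` modulo `IL`). -/
theorem standard_basis_normaliser {R A L : Type*} [CommRing R] [CommRing A] [Algebra R A]
    [LieRing L] [LieAlgebra R L] [Module A L]
    (LR : LieRinehart R A L) (I : Ideal A)
    {d r : ℕ} (hrd : r ≤ d)
    (b : Module.Basis (Fin d) A L) (f : Fin r → A)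
    (hgen : I = Ideal.span (Set.range f))
    (hδ : ∀ (i : Fin d) (j : Fin r),
      LR.ρ (b i) (f j) = if (i : ℕ) = (j : ℕ) then 1 else 0) :
    -- (a) the centraliser of `F` is `A x_{r+1} ⊕ ⋯ ⊕ A x_d`:
    (∀ y : L, (∀ j : Fin r, LR.ρ y (f j) = 0) ↔
      y ∈ Submodule.span A (b '' {i : Fin d | r ≤ (i : ℕ)})) ∧
    -- (b) `N_L(I) = I x₁ ⊕ ⋯ ⊕ I x_r ⊕ C_L(F)`:
    (∀ y : L, (∀ a ∈ I, LR.ρ y a ∈ I) ↔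
      ∃ c : Fin d → A, (∀ i : Fin d, (i : ℕ) < r → c i ∈ I) ∧ y = ∑ i, c i • b i) ∧
    -- (c) `N_L(I)/IL` is free over `A/I` on the images of `x_{r+1},…,x_d`:
    (∀ y : L, (∀ a ∈ I, LR.ρ y a ∈ I) →
      (∃ c : Fin d → A, (∀ i : Fin d, (i : ℕ) < r → c i = 0) ∧
        y - (∑ i, c i • b i) ∈ I • (⊤ : Submodule A L)) ∧
      (∀ c c' : Fin d → A,
        y - (∑ i, c i • b i) ∈ I • (⊤ : Submodule A L) →
        y - (∑ i, c' i • b i) ∈ I • (⊤ : Submodule A L) →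
        ∀ i : Fin d, c i - c' i ∈ I)) ∧
    -- (d) `N_L(I)/IL ≅ C_L(F)/I·C_L(F)` as `(R, A/I)`-Lie algebras, via the inclusion:
    ((∀ y : L, (∀ a ∈ I, LR.ρ y a ∈ I) →
      ∃ z ∈ Submodule.span A (b '' {i : Fin d | r ≤ (i : ℕ)}),
        y - z ∈ I • (⊤ : Submodule A L)) ∧
      (∀ z ∈ Submodule.span A (b '' {i : Fin d | r ≤ (i : ℕ)}),
        (z ∈ I • (⊤ : Submodule A L) ↔
          z ∈ I • Submodule.span A (b '' {i : Fin d | r ≤ (i : ℕ)})))) := by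
  have mem_span_iff : ∀ z : L, z ∈ Submodule.span A (b '' {i : Fin d | r ≤ (i : ℕ)}) ↔
      ∀ i : Fin d, (i : ℕ) < r → b.repr z i = 0 := by
    simp [b.mem_span_image_iff_repr_eq_zero]
  have mem_normaliser_iff := LR.normalises_iff b hrd hδ hgen
  have exists_sub_mem : ∀ y : L, (∀ a ∈ I, LR.ρ y a ∈ I) → ∃ c : Fin d → A,
      (∀ i : Fin d, (i : ℕ) < r → c i = 0) ∧ y - ∑ i, c i • b i ∈ I • (⊤ : Submodule A L) :=
    fun y hy => by
      simpa using b.exists_sub_sum_mem_ideal_smul_top I {i | r ≤ (i : ℕ)}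
        (by simpa using (mem_normaliser_iff y).1 hy)
  refine ⟨fun y => (LR.centralises_iff b hrd hδ y).trans (mem_span_iff y).symm,
    fun y => ?_, fun y hy => ⟨exists_sub_mem y hy, fun _ _ =>
      b.sub_mem_of_sub_sum_mem_ideal_smul_top I⟩, fun y hy => ?_, fun z hz => ?_⟩
  · rw [mem_normaliser_iff]
    refine ⟨fun h => ⟨b.repr y, h, (b.sum_repr y).symm⟩, ?_⟩
    rintro ⟨c, hc, rfl⟩
    simpa only [b.repr_sum_self] using hc
  · obtain ⟨c, hc, hsub⟩ := exists_sub_mem y hy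
    exact ⟨∑ i, c i • b i, (mem_span_iff _).2 (by simpa only [b.repr_sum_self] using hc), hsub⟩
  · rw [b.mem_ideal_smul_top_iff, b.mem_ideal_smul_span_image_iff]
    exact ⟨fun h => ⟨hz, h⟩, And.right⟩
end

section
/- Let K be a field of characteristic zero, U an associative K-algebra with elements f, x satisfying [x,f] = 1 (so x·f − f·x = 1 acting on the right appropriately), M a right U-module, and v ∈ M with v·f^{N+1} = 0 for some N. Define e_j(v) := Σ_{n=j}^N v·(f^n/n!)·C(n,j)·(−x)^{n−j}. Then e_j(v)·f = 0 for every j ≥ 0, i.e. each e_j(v) is annihilated by f. -/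
/-!
Put `y = -x`, so that `f y - y f = 1`. Since `(n!)⁻¹ C(n, j) = (j!)⁻¹ (i!)⁻¹` for `n = j + i`, the
vector `e_j(v)` is `(j!)⁻¹ Σ_{i ≤ N - j} w f^i y^i / i!` with `w = v f^j`, and `w f^(N - j + 1) = 0`.
From `y^(i+1) f = f y^(i+1) - (i+1) y^i` the sum `Σ_{i ≤ m} f^i y^i f / i!` telescopes to
`f^(m+1) y^m / m!` in the algebra, which kills `w` for `m = N - j`.
-/

open Finset MulOpposite
open scoped Nat

section Commutation

variable {U : Type*} [Ring U] {f y : U}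

theorem pow_succ_mul_eq_of_mul_sub_mul_eq_one (h : f * y - y * f = 1) (k : ℕ) :
    y ^ (k + 1) * f = f * y ^ (k + 1) - (k + 1) • y ^ k := by
  have hyf : y * f = f * y - 1 := by rw [← h, sub_sub_cancel]
  induction k with
  | zero => simpa using hyf
  | succ k ih =>
    calc y ^ (k + 2) * f = y * (y ^ (k + 1) * f) := by rw [pow_succ' y (k + 1), mul_assoc]
      _ = (y * f) * y ^ (k + 1) - (k + 1) • y ^ (k + 1) := by
        rw [ih, mul_sub, mul_smul_comm, ← mul_assoc, ← pow_succ']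
      _ = f * y ^ (k + 2) - (k + 2) • y ^ (k + 1) := by
        rw [hyf, sub_mul, one_mul, mul_assoc, ← pow_succ']; module

end Commutation

section Telescoping

variable {K U : Type*} [Field K] [CharZero K] [Ring U] [Algebra K U] {f y : U}

theorem sum_inv_factorial_smul_pow_mul_pow_mul (h : f * y - y * f = 1) (m : ℕ) :
    ∑ i ∈ range (m + 1), ((i ! : K)⁻¹ • (f ^ i * y ^ i * f)) =
      (m ! : K)⁻¹ • (f ^ (m + 1) * y ^ m) := by
  induction m with
  | zero => simp
  | succ m ih =>
    have hterm : f ^ (m + 1) * y ^ (m + 1) * f =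
        f ^ (m + 2) * y ^ (m + 1) - (m + 1) • (f ^ (m + 1) * y ^ m) := by
      rw [mul_assoc, pow_succ_mul_eq_of_mul_sub_mul_eq_one h, mul_sub, mul_smul_comm,
        ← mul_assoc, ← pow_succ]
    have hfact : ((m + 1)! : K)⁻¹ * (m + 1 : ℕ) = (m ! : K)⁻¹ := by
      rw [Nat.factorial_succ, Nat.cast_mul, mul_inv, mul_comm, ← mul_assoc,
        mul_inv_cancel₀ (Nat.cast_ne_zero.2 m.succ_ne_zero), one_mul]
    rw [sum_range_succ, ih, hterm, smul_sub, ← Nat.cast_smul_eq_nsmul K, smul_smul, hfact]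
    abel

end Telescoping

theorem inv_factorial_add_mul_choose {K : Type*} [Field K] [CharZero K] (j i : ℕ) :
    (((j + i)! : K)⁻¹ * ((j + i).choose j : K)) = (j ! : K)⁻¹ * (i ! : K)⁻¹ := by
  rw [Nat.cast_add_choose, div_eq_mul_inv, inv_mul_cancel_left₀ (by simp [Nat.factorial_ne_zero]),
    mul_inv]

section Module

variable {K U M : Type*} [Field K] [CharZero K] [Ring U] [Algebra K U] [AddCommGroup M]
  [Module Uᵐᵒᵖ M] [Module K M] [IsScalarTower K Uᵐᵒᵖ M] {f y : U}

theorem op_smul_sum_inv_factorial_smul_eq_zero (h : f * y - y * f = 1) {m : ℕ} {w : M}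
    (hw : op (f ^ (m + 1)) • w = 0) :
    op f • ∑ i ∈ range (m + 1), (i ! : K)⁻¹ • (op (y ^ i) • op (f ^ i) • w) = 0 := by
  have hterm (i : ℕ) : op f • (i ! : K)⁻¹ • (op (y ^ i) • op (f ^ i) • w) =
      op ((i ! : K)⁻¹ • (f ^ i * y ^ i * f)) • w := by
    rw [smul_comm, op_smul, smul_assoc]
    simp only [← mul_smul, ← op_mul, mul_assoc]
  calc _ = op (∑ i ∈ range (m + 1), (i ! : K)⁻¹ • (f ^ i * y ^ i * f)) • w := by
        rw [smul_sum, op_sum, sum_smul]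
        exact sum_congr rfl fun i _ => hterm i
    _ = (m ! : K)⁻¹ • op (y ^ m) • op (f ^ (m + 1)) • w := by
        rw [sum_inv_factorial_smul_pow_mul_pow_mul h, op_smul, smul_assoc, op_mul, mul_smul]
    _ = 0 := by rw [hw, smul_zero, smul_zero]

end Module

/-- let `K` be a field of characteristic zero, `U` a `K`-algebra with
elements `f`, `x` satisfying `[x,f] = 1`, `M` a right `U`-module (a left
`Uᵐᵒᵖ`-module) and `v ∈ M` with `v·f^{N+1} = 0`. Define
`e_j(v) = Σ_{n=j}^N v·(f^n/n!)·C(n,j)·(−x)^{n−j}`. Then `e_j(v)·f = 0` for every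
`j ≥ 0`. -/
theorem e_j_killed_by_f {K U M : Type*} [Field K] [CharZero K]
    [Ring U] [Algebra K U] [AddCommGroup M] [Module Uᵐᵒᵖ M]
    [Module K M] [IsScalarTower K Uᵐᵒᵖ M]
    (f x : U) (hfx : x * f - f * x = 1)
    (N : ℕ) (v : M) (hv : op (f ^ (N + 1)) • v = 0) :
    ∀ j : ℕ, op f •
      (∑ n ∈ Finset.Icc j N, ((n.factorial : K)⁻¹ * (n.choose j : K)) •
        (op ((-x) ^ (n - j)) • (op (f ^ n) • v))) = 0 := by
  intro j
  rcases le_or_gt j N with hjN | hNj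
  · obtain ⟨m, rfl⟩ := Nat.exists_eq_add_of_le hjN
    have hfy : f * -x - -x * f = 1 := by rw [← hfx]; noncomm_ring
    have hw : op (f ^ (m + 1)) • op (f ^ j) • v = 0 := by
      rw [← mul_smul, ← op_mul, ← pow_add, ← add_assoc, hv]
    have hterm (i : ℕ) : (((j + i)! : K)⁻¹ * ((j + i).choose j : K)) •
        (op ((-x) ^ (j + i - j)) • op (f ^ (j + i)) • v) =
        (j ! : K)⁻¹ • (i ! : K)⁻¹ • (op ((-x) ^ i) • op (f ^ i) • op (f ^ j) • v) := by
      rw [inv_factorial_add_mul_choose, mul_smul, Nat.add_sub_cancel_left, ← mul_smul (op (f ^ i)),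
        ← op_mul, ← pow_add]
    rw [← Ico_add_one_right_eq_Icc, sum_Ico_eq_sum_range, add_assoc, Nat.add_sub_cancel_left]
    simp only [hterm]
    rw [← smul_sum, smul_comm, op_smul_sum_inv_factorial_smul_eq_zero hfy hw, smul_zero]
  · rw [Icc_eq_empty (by omega), sum_empty, smul_zero]
end

section
/- Let A be a regular local ring containing a field F of characteristic zero such that A/𝔪 ≅ F, with maximal ideal 𝔪 generated by a regular system of parameters f₁,…,f_r, and suppose D₁,…,D_r are derivations of A with D_i(f_j) = δ_{ij}. If J is a nonzero ideal of A stable under all D_i (i.e. D_i(J) ⊆ J for all i), and the 𝔪-adic filtration on A is separated, then J = A. Equivalently: the associated graded ring gr_𝔪 A ≅ F[y₁,…,y_r] has no non-trivial ideals stable under all partial derivatives ∂/∂y_i. -/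
/-- let `A` be a regular local ring containing a field `F` of
characteristic zero with `A/𝔪 ≅ F`, whose maximal ideal `𝔪` is generated by a regular
system of parameters `f₁,…,f_r` (so `r` equals the Krull dimension of `A`), and let
`D₁,…,D_r` be derivations of `A` with `D_i(f_j) = δ_{ij}`. If the `𝔪`-adic filtration
is separated and `J` is a nonzero ideal of `A` stable under all the `D_i`, then
`J = A`. -/
theorem stable_ideal_of_regular_local {F A : Type*} [Field F] [CharZero F]
    [CommRing A] [IsLocalRing A] [IsNoetherianRing A] [Algebra F A]
    -- the residue field of `A` is `F`:
    (hres : Function.Bijective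
      ((Ideal.Quotient.mk (IsLocalRing.maximalIdeal A)).comp (algebraMap F A)))
    {r : ℕ} (f : Fin r → A)
    -- `f₁,…,f_r` is a regular system of parameters: it generates `𝔪` and
    -- `r` is the Krull dimension of `A` (so `A` is a regular local ring):
    (hf : Ideal.span (Set.range f) = IsLocalRing.maximalIdeal A)
    (hreg : ringKrullDim A = r)
    (D : Fin r → Derivation F A A)
    (hD : ∀ i j : Fin r, D i (f j) = if i = j then 1 else 0)
    -- the `𝔪`-adic filtration on `A` is separated:
    (hsep : (⨅ n : ℕ, IsLocalRing.maximalIdeal A ^ n) = ⊥)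
    (J : Ideal A) (hJ : J ≠ ⊥)
    (hstab : ∀ i : Fin r, ∀ a ∈ J, D i a ∈ J) :
    J = ⊤ := by
  classical
  set m : Ideal A := IsLocalRing.maximalIdeal A with hm
  have hfi : ∀ i, f i ∈ m := fun i => hf ▸ Ideal.subset_span ⟨i, rfl⟩
  -- the "Euler operator"
  set E : A → A := fun a => ∑ i, f i * D i a with hE
  have hEmem : ∀ a : A, E a ∈ m :=
    fun a => Ideal.sum_mem _ fun i _ => Ideal.mul_mem_right _ _ (hfi i)
  have hEadd : ∀ x y : A, E (x + y) = E x + E y := by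
    intro x y
    simp only [hE, map_add, mul_add, Finset.sum_add_distrib]
  have hEmul : ∀ x y : A, E (x * y) = x * E y + y * E x := by
    intro x y
    simp only [hE, Derivation.leibniz, smul_eq_mul, mul_add]
    rw [Finset.sum_add_distrib, Finset.mul_sum, Finset.mul_sum]
    congr 1 <;> exact Finset.sum_congr rfl fun i _ => by ring
  -- degree-one case of the Euler identity
  have case1 : ∀ a ∈ m, E a - a ∈ m ^ 2 := by
    intro a ha
    rw [← hf] at ha
    induction ha using Submodule.span_induction with
    | mem x hx =>
      obtain ⟨j, rfl⟩ := hx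
      have : E (f j) = f j := by
        simp only [hE, hD, mul_ite, mul_one, mul_zero]
        simp
      rw [this, sub_self]
      exact Ideal.zero_mem _
    | zero =>
      have : E 0 = 0 := by simp [hE]
      rw [this, sub_zero]
      exact Ideal.zero_mem _
    | add x y hx hy ihx ihy =>
      have : E (x + y) - (x + y) = (E x - x) + (E y - y) := by
        rw [hEadd]; ring
      rw [this]
      exact Ideal.add_mem _ ihx ihy
    | smul c x hx ih =>
      have hxm : x ∈ m := hf ▸ hx
      have : E (c • x) - c • x = c * (E x - x) + x * E c := by
        rw [smul_eq_mul, hEmul]; ring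
      rw [this]
      refine Ideal.add_mem _ (Ideal.mul_mem_left _ _ ih) ?_
      rw [pow_two]
      exact Ideal.mul_mem_mul hxm (hEmem c)
  -- the Euler identity: E a ≡ n • a mod m^(n+1) for a ∈ m^n
  have euler : ∀ n : ℕ, ∀ a ∈ m ^ n, E a - n • a ∈ m ^ (n + 1) := by
    intro n
    induction n with
    | zero =>
      intro a _
      simpa using hEmem a
    | succ n ih =>
      intro a ha
      rw [pow_succ] at ha
      refine Submodule.mul_induction_on ha ?_ ?_
      · intro x hx y hy
        have key : E (x * y) - (n + 1 : ℕ) • (x * y)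
            = x * (E y - y) + y * (E x - n • x) := by
          rw [hEmul]
          push_cast [nsmul_eq_mul]
          ring
        rw [key]
        refine Ideal.add_mem _ ?_ ?_
        · have : x * (E y - y) ∈ m ^ n * m ^ 2 := Ideal.mul_mem_mul hx (case1 y hy)
          rwa [← pow_add] at this
        · have : y * (E x - n • x) ∈ m ^ 1 * m ^ (n + 1) := by
            refine Ideal.mul_mem_mul ?_ (ih x hx)
            rwa [pow_one]
          rwa [← pow_add, add_comm 1 (n + 1)] at this
      · intro x y ihx ihy
        have : E (x + y) - (n + 1 : ℕ) • (x + y)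
            = (E x - (n + 1 : ℕ) • x) + (E y - (n + 1 : ℕ) • y) := by
          rw [hEadd, smul_add]; ring
        rw [this]
        exact Ideal.add_mem _ ihx ihy
  -- positive integers are units in A
  have hunit : ∀ n : ℕ, 0 < n → IsUnit (n : A) := by
    intro n hn
    have h2 : IsUnit (n : F) := (Nat.cast_ne_zero.mpr hn.ne').isUnit
    have h3 := h2.map (algebraMap F A)
    rwa [map_natCast] at h3
  -- key descent: an element of J of finite m-adic order forces J = ⊤
  have key : ∀ n : ℕ, ∀ a ∈ J, a ∉ m ^ n → J = ⊤ := by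
    intro n
    induction n with
    | zero => intro a _ ha; exact absurd (by simp) ha
    | succ n ih =>
      intro a haJ han1
      by_cases h : a ∈ m ^ n
      · -- a has exact order n
        rcases Nat.eq_zero_or_pos n with h0 | hpos
        · -- order 0 : a is a unit
          subst h0
          rw [pow_one] at han1
          exact J.eq_top_of_isUnit_mem haJ (not_not.mp han1)
        · -- order n ≥ 1 : some D i a has smaller order
          by_contra _
          have hDa : ∃ i, D i a ∉ m ^ n := by
            by_contra hc
            push_neg at hc
            have hEa : E a ∈ m ^ (n + 1) := by
              rw [pow_succ, mul_comm]
              exact Ideal.sum_mem _ fun i _ => Ideal.mul_mem_mul (hfi i) (hc i)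
            have hna : (n : A) * a ∈ m ^ (n + 1) := by
              have := (m ^ (n + 1)).sub_mem hEa (euler n a h)
              rwa [sub_sub_cancel, nsmul_eq_mul] at this
            obtain ⟨u, hu⟩ := hunit n hpos
            have : a ∈ m ^ (n + 1) := by
              have : (↑u⁻¹ : A) * ((n : A) * a) ∈ m ^ (n + 1) :=
                Ideal.mul_mem_left _ _ hna
              rwa [← hu, ← mul_assoc, Units.inv_mul, one_mul] at this
            exact han1 this
          obtain ⟨i, hi⟩ := hDa
          exact absurd (ih (D i a) (hstab i a haJ) hi) ‹_›
      · exact ih a haJ h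
  -- find a nonzero element of J and its finite order
  obtain ⟨a, haJ, ha0⟩ := Submodule.exists_mem_ne_zero_of_ne_bot hJ
  have : ∃ n, a ∉ m ^ n := by
    by_contra hc
    push_neg at hc
    have : a ∈ (⨅ n : ℕ, m ^ n) := Submodule.mem_iInf _ |>.mpr hc
    rw [hsep] at this
    exact ha0 this
  obtain ⟨n, hn⟩ := this
  exact key n a haJ hn
end
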